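/- arXiv:math/0409330 — 2 statements merged into one kernel-verified Lean document; each statement's English description precedes it below -/
import Mathlib

section
/- For each real number q with 0 < q ≤ 2 there is a positive real number C(q), depending only on q, such that for every positive integer ℓ and every function f on B_ℓ that is a linear combination of the Rademacher functions r_1, …, r_ℓ, one has ‖f‖_2 ≤ C(q) · ‖f‖_q (Khintchine's inequality, lower half). -/
/-!
For `f = Σ aⱼ rⱼ` one has `‖f‖₂² = Σ aⱼ²` and `‖f‖₄⁴ ≤ 3 ‖f‖₂⁴`; both follow by induction on `ℓ`,
conditioning on the first coordinate, since `(g + c)⁴ + (g - c)⁴ = 2g⁴ + 12c²g² + 2c⁴`.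
By Hölder, `‖f‖₂ ≤ ‖f‖_q^θ ‖f‖₄^(1-θ)` with `θ = q / (4 - q)`; bounding `‖f‖₄` by `3^(1/4) ‖f‖₂`
and dividing by `‖f‖₂^(1-θ)` gives `‖f‖₂ ≤ 3^((1-θ)/(4θ)) ‖f‖_q`.
-/

open Finset

/-- The value `±1 ∈ ℝ` attached to a coordinate of a point of `B_ℓ = {−1,1}^ℓ`,
modelled as `Fin ℓ → Bool`.  `sgn (x j)` is the Rademacher function `r_j` at `x`. -/
def sgn (b : Bool) : ℝ := if b then 1 else -1

/-- `‖f‖_p = (2^{−ℓ} Σ_{x ∈ B_ℓ} |f(x)|ᵖ)^{1/p}` for a function `f` on `B_ℓ`. -/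
noncomputable def pnorm (ℓ : ℕ) (p : ℝ) (f : (Fin ℓ → Bool) → ℝ) : ℝ :=
  ((2:ℝ) ^ (-(ℓ:ℤ)) * ∑ x : Fin ℓ → Bool, |f x| ^ p) ^ (1 / p)

lemma pnorm_nonneg (ℓ : ℕ) (p : ℝ) (f : (Fin ℓ → Bool) → ℝ) : 0 ≤ pnorm ℓ p f := by
  unfold pnorm; positivity

lemma pnorm_eq_of_even {ℓ : ℕ} {p : ℝ} {n : ℕ} (hpn : p = n) (hn : Even n)
    (f : (Fin ℓ → Bool) → ℝ) :
    pnorm ℓ p f = ((2 : ℝ) ^ (-(ℓ : ℤ)) * ∑ x, f x ^ n) ^ (1 / p) := by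
  simp only [pnorm, hpn, Real.rpow_natCast, hn.pow_abs]

lemma two_zpow_neg_mul_two_pow (ℓ : ℕ) : (2 : ℝ) ^ (-(ℓ : ℤ)) * 2 ^ ℓ = 1 := by
  rw [zpow_neg, zpow_natCast, inv_mul_cancel₀ (by positivity)]

lemma pnorm_le_pnorm_rpow_mul_pnorm_rpow {ℓ : ℕ} {p p₀ p₁ θ : ℝ} (hp₀ : 0 < p₀) (hp₁ : 0 < p₁)
    (hθ₀ : 0 < θ) (hθ₁ : θ < 1) (hp : p⁻¹ = θ / p₀ + (1 - θ) / p₁)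
    (f : (Fin ℓ → Bool) → ℝ) :
    pnorm ℓ p f ≤ pnorm ℓ p₀ f ^ θ * pnorm ℓ p₁ f ^ (1 - θ) := by
  have hp_pos : 0 < p := inv_pos.mp (hp ▸ by have := sub_pos.2 hθ₁; positivity)
  set w : ℝ := 2 ^ (-(ℓ : ℤ))
  have hw : 0 < w := by positivity
  set S₀ := ∑ x, |f x| ^ p₀
  set S₁ := ∑ x, |f x| ^ p₁
  have hS₀ : 0 ≤ S₀ := by positivity
  have hS₁ : 0 ≤ S₁ := by positivity
  -- Hölder for `|f|^θ · |f|^(1-θ)` with exponents `p₀ / θ` and `p₁ / (1 - θ)`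
  have holder : ∑ x, |f x| ^ p ≤ S₀ ^ (p * (θ / p₀)) * S₁ ^ (p * ((1 - θ) / p₁)) := by
    have hT : (p₀ / θ).HolderTriple (p₁ / (1 - θ)) p :=
      ⟨by rw [inv_div, inv_div, hp], by positivity, div_pos hp₁ (sub_pos.2 hθ₁)⟩
    have := Real.Lr_rpow_le_Lp_mul_Lq_of_nonneg univ hT
      (f := fun x => |f x| ^ θ) (g := fun x => |f x| ^ (1 - θ))
      (fun x _ => by positivity) (fun x _ => by positivity)
    have e₀ : θ * (p₀ / θ) = p₀ := by field_simp
    have e₁ : (1 - θ) * (p₁ / (1 - θ)) = p₁ := by field_simp [(sub_pos.2 hθ₁).ne']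
    simpa only [← Real.rpow_mul (abs_nonneg _), ← Real.rpow_add' (abs_nonneg _)
      (show θ + (1 - θ) ≠ 0 by norm_num), add_sub_cancel, Real.rpow_one, e₀, e₁,
      div_div_eq_mul_div, mul_div_assoc] using this
  have hw_split : w = w ^ (p * (θ / p₀)) * w ^ (p * ((1 - θ) / p₁)) := by
    rw [← Real.rpow_add hw, ← mul_add, ← hp, mul_inv_cancel₀ hp_pos.ne', Real.rpow_one]
  calc pnorm ℓ p f ≤ (w * (S₀ ^ (p * (θ / p₀)) * S₁ ^ (p * ((1 - θ) / p₁)))) ^ (1 / p) := by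
        unfold pnorm; gcongr
    _ = (w * S₀) ^ (θ / p₀) * (w * S₁) ^ ((1 - θ) / p₁) := by
        nth_rw 1 [hw_split]
        rw [mul_mul_mul_comm, ← Real.mul_rpow hw.le hS₀, ← Real.mul_rpow hw.le hS₁,
          Real.mul_rpow (by positivity) (by positivity), ← Real.rpow_mul (by positivity),
          ← Real.rpow_mul (by positivity)]
        field_simp
    _ = pnorm ℓ p₀ f ^ θ * pnorm ℓ p₁ f ^ (1 - θ) := by
        show _ = ((w * S₀) ^ (1 / p₀)) ^ θ * ((w * S₁) ^ (1 / p₁)) ^ (1 - θ)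
        rw [← Real.rpow_mul (by positivity), ← Real.rpow_mul (by positivity)]
        field_simp

lemma pnorm_le_rpow_mul_pnorm_of_pnorm_le {ℓ : ℕ} {p p₀ p₁ θ K : ℝ} (hp₀ : 0 < p₀)
    (hp₁ : 0 < p₁) (hθ₀ : 0 < θ) (hθ₁ : θ < 1) (hp : p⁻¹ = θ / p₀ + (1 - θ) / p₁)
    (hK : 0 ≤ K) {f : (Fin ℓ → Bool) → ℝ} (hf : pnorm ℓ p₁ f ≤ K * pnorm ℓ p f) :
    pnorm ℓ p f ≤ K ^ ((1 - θ) / θ) * pnorm ℓ p₀ f := by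
  set A := pnorm ℓ p₀ f
  set B := pnorm ℓ p f
  have hA : 0 ≤ A := pnorm_nonneg ..
  rcases (show 0 ≤ B from pnorm_nonneg ..).eq_or_lt with hB | hB
  · rw [← hB]; positivity
  have h : B ^ θ * B ^ (1 - θ) ≤ (A ^ θ * K ^ (1 - θ)) * B ^ (1 - θ) :=
    calc B ^ θ * B ^ (1 - θ) = B := by rw [← Real.rpow_add hB, add_sub_cancel, Real.rpow_one]
      _ ≤ A ^ θ * pnorm ℓ p₁ f ^ (1 - θ) :=
          pnorm_le_pnorm_rpow_mul_pnorm_rpow hp₀ hp₁ hθ₀ hθ₁ hp f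
      _ ≤ A ^ θ * (K * B) ^ (1 - θ) := by
          gcongr
          exact pnorm_nonneg ..
      _ = (A ^ θ * K ^ (1 - θ)) * B ^ (1 - θ) := by rw [Real.mul_rpow hK hB.le, mul_assoc]
  have h' := le_of_mul_le_mul_right h (by positivity)
  calc B = (B ^ θ) ^ θ⁻¹ := by rw [← Real.rpow_mul hB.le, mul_inv_cancel₀ hθ₀.ne', Real.rpow_one]
    _ ≤ (A ^ θ * K ^ (1 - θ)) ^ θ⁻¹ := by gcongr
    _ = K ^ ((1 - θ) / θ) * A := by
        rw [Real.mul_rpow (by positivity) (by positivity), ← Real.rpow_mul hA,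
          ← Real.rpow_mul hK, mul_inv_cancel₀ hθ₀.ne', Real.rpow_one, mul_comm, div_eq_mul_inv]

lemma sum_bool_cube_succ {n : ℕ} (g : (Fin (n + 1) → Bool) → ℝ) :
    ∑ x, g x = ∑ x : Fin n → Bool, (g (Fin.cons true x) + g (Fin.cons false x)) := by
  rw [← (Fin.consEquiv fun _ => Bool).sum_comp, Fintype.sum_prod_type, Fintype.sum_bool,
    ← Finset.sum_add_distrib]
  rfl

def rademacherSum {ℓ : ℕ} (a : Fin ℓ → ℝ) (x : Fin ℓ → Bool) : ℝ := ∑ j, a j * sgn (x j)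

lemma sum_comp_rademacherSum_succ {n : ℕ} (a : Fin (n + 1) → ℝ) (φ : ℝ → ℝ) :
    ∑ x, φ (rademacherSum a x) = ∑ x : Fin n → Bool,
      (φ (rademacherSum (Fin.tail a) x + a 0) + φ (rademacherSum (Fin.tail a) x - a 0)) := by
  rw [sum_bool_cube_succ]
  refine Finset.sum_congr rfl fun x _ => ?_
  simp only [rademacherSum, Fin.sum_univ_succ, Fin.cons_zero, Fin.cons_succ, Fin.tail, sgn,
    if_true, Bool.false_eq_true, if_false]
  congr 1 <;> ring_nf

lemma sum_rademacherSum_sq {ℓ : ℕ} (a : Fin ℓ → ℝ) :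
    ∑ x, rademacherSum a x ^ 2 = 2 ^ ℓ * ∑ j, a j ^ 2 := by
  induction ℓ with
  | zero => simp [rademacherSum]
  | succ n ih =>
    have parallelogram (g c : ℝ) : (g + c) ^ 2 + (g - c) ^ 2 = 2 * g ^ 2 + 2 * c ^ 2 := by ring
    simp only [sum_comp_rademacherSum_succ a (· ^ 2), parallelogram, Finset.sum_add_distrib,
      ← Finset.mul_sum, ih, Fin.sum_univ_succ]
    simp only [Fin.tail, sum_const, card_univ, Fintype.card_pi, Fintype.card_bool, prod_const,
      Fintype.card_fin, nsmul_eq_mul, Nat.cast_pow, Nat.cast_ofNat]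
    ring

lemma sum_rademacherSum_pow_four_le {ℓ : ℕ} (a : Fin ℓ → ℝ) :
    ∑ x, rademacherSum a x ^ 4 ≤ 3 * 2 ^ ℓ * (∑ j, a j ^ 2) ^ 2 := by
  induction ℓ with
  | zero => simp [rademacherSum]
  | succ n ih =>
    have expand (g c : ℝ) :
        (g + c) ^ 4 + (g - c) ^ 4 = 2 * g ^ 4 + 12 * c ^ 2 * g ^ 2 + 2 * c ^ 4 := by ring
    simp only [sum_comp_rademacherSum_succ a (· ^ 4), expand, Finset.sum_add_distrib,
      ← Finset.mul_sum, sum_rademacherSum_sq, Fin.sum_univ_succ]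
    have h4 := ih (Fin.tail a)
    simp only [Fin.tail] at h4
    simp only [Fin.tail, Finset.sum_const, Finset.card_univ, Fintype.card_fun, Fintype.card_bool,
      Fintype.card_fin, nsmul_eq_mul, Nat.cast_pow, Nat.cast_ofNat, pow_succ (2 : ℝ) n]
    have : 0 ≤ 2 ^ n * a 0 ^ 4 := by positivity
    nlinarith

lemma pnorm_four_rademacherSum_le {ℓ : ℕ} (a : Fin ℓ → ℝ) :
    pnorm ℓ 4 (rademacherSum a) ≤ 3 ^ (1 / 4 : ℝ) * pnorm ℓ 2 (rademacherSum a) := by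
  set T := ∑ j, a j ^ 2
  have hT : 0 ≤ T := by positivity
  have h₂ : pnorm ℓ 2 (rademacherSum a) = T ^ (1 / 2 : ℝ) := by
    rw [pnorm_eq_of_even (n := 2) (by norm_num) even_two, sum_rademacherSum_sq, ← mul_assoc,
      two_zpow_neg_mul_two_pow, one_mul]
  calc pnorm ℓ 4 (rademacherSum a)
      ≤ ((2 : ℝ) ^ (-(ℓ : ℤ)) * (3 * 2 ^ ℓ * T ^ 2)) ^ (1 / 4 : ℝ) := by
        rw [pnorm_eq_of_even (n := 4) (by norm_num) (by decide)]
        gcongr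
        exact sum_rademacherSum_pow_four_le a
    _ = 3 ^ (1 / 4 : ℝ) * pnorm ℓ 2 (rademacherSum a) := by
        rw [h₂, show (2 : ℝ) ^ (-(ℓ : ℤ)) * (3 * 2 ^ ℓ * T ^ 2) = 3 * T ^ 2 by
            linear_combination 3 * T ^ 2 * two_zpow_neg_mul_two_pow ℓ,
          Real.mul_rpow (by norm_num) (by positivity), ← Real.rpow_natCast,
          ← Real.rpow_mul hT]
        norm_num

/-- Khintchine's inequality, lower half: for each `0 < q ≤ 2` there is
`C(q) > 0` such that every linear combination `f = Σ_j a_j r_j` of Rademacher functions on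
`B_ℓ` satisfies `‖f‖_2 ≤ C(q) ‖f‖_q`. -/
theorem stmt3 (q : ℝ) (hq0 : 0 < q) (hq2 : q ≤ 2) :
    ∃ C : ℝ, 0 < C ∧ ∀ (ℓ : ℕ), 0 < ℓ → ∀ a : Fin ℓ → ℝ,
      pnorm ℓ 2 (fun x => ∑ j, a j * sgn (x j))
        ≤ C * pnorm ℓ q (fun x => ∑ j, a j * sgn (x j)) := by
  rcases hq2.lt_or_eq with hlt | rfl
  · set θ := q / (4 - q)
    have hθ₀ : 0 < θ := div_pos hq0 (by linarith)
    have hθ₁ : θ < 1 := (div_lt_one (by linarith)).2 (by linarith)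
    have hinterp : (2 : ℝ)⁻¹ = θ / q + (1 - θ) / 4 := by
      have : 4 - q ≠ 0 := by linarith
      simp only [θ]
      field_simp
      ring
    refine ⟨(3 ^ (1 / 4 : ℝ)) ^ ((1 - θ) / θ), by positivity, fun ℓ _ a => ?_⟩
    exact pnorm_le_rpow_mul_pnorm_of_pnorm_le hq0 four_pos hθ₀ hθ₁ hinterp (by positivity)
      (pnorm_four_rademacherSum_le a)
  · exact ⟨1, one_pos, fun ℓ _ a => (one_mul _).ge⟩
end

section
/- There is a positive constant C such that for every nonnegative integer m and all complex numbers c_0, …, c_m, the lacunary polynomial f(z) = Σ_{j=0}^m c_j z^{2^j} satisfies (1/2π) ∫_𝕋 |f(z)|⁴ |dz| ≤ C · ((1/2π) ∫_𝕋 |f(z)|² |dz|)², where 𝕋 is the unit circle in the complex plane and the integrals are with respect to arc-length measure |dz|. -/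
/-!
On the circle, `f(e^{iθ}) = ∑ c_j e^{i 2^j θ}` has distinct frequencies, so Parseval gives
`∫ |f|² = 2π ∑ |c_j|²`. Its square `f² = ∑_{j,k} c_j c_k e^{i (2^j + 2^k) θ}` has repeated
frequencies, but by uniqueness of binary expansions `2^j + 2^k` determines `{j, k}`, so
each frequency comes from at most two pairs. Parseval with coinciding frequencies then gives
`∫ |f|⁴ = ∫ |f²|² ≤ 2 · 2π (∑ |c_j|²)²`, i.e. the theorem with `C = 2`.
-/

lemma Nat.bitIndices_two_pow_add_two_pow_of_lt {j k : ℕ} (h : j < k) :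
    (2 ^ j + 2 ^ k).bitIndices = [j, k] := by
  simpa using
    Nat.bitIndices_sum_map_two_pow (L := [j, k]) (by simp [List.sortedLT_iff_pairwise, h])

lemma Nat.bitIndices_two_pow_add_two_pow (j k : ℕ) :
    (2 ^ j + 2 ^ k).bitIndices =
      if j < k then [j, k] else if k < j then [k, j] else [j + 1] := by
  split_ifs with hjk hkj
  · exact bitIndices_two_pow_add_two_pow_of_lt hjk
  · rw [add_comm]; exact bitIndices_two_pow_add_two_pow_of_lt hkj
  · obtain rfl : j = k := by omega
    rw [← two_mul, ← pow_succ', bitIndices_two_pow]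

lemma Nat.two_pow_add_two_pow_eq_iff {j k l n : ℕ} :
    2 ^ j + 2 ^ k = 2 ^ l + 2 ^ n ↔ (l = j ∧ n = k) ∨ (l = k ∧ n = j) := by
  refine ⟨fun h => ?_, ?_⟩
  · have := congrArg Nat.bitIndices h
    simp only [Nat.bitIndices_two_pow_add_two_pow] at this
    split_ifs at this <;> simp at this <;> omega
  · rintro (⟨rfl, rfl⟩ | ⟨rfl, rfl⟩) <;> ring

open Finset Complex intervalIntegral ComplexConjugate
open scoped Real

lemma integral_exp_int_mul_I (n : ℤ) :
    ∫ θ in (0:ℝ)..2 * π, exp (n * θ * I) = if n = 0 then (2 * π : ℂ) else 0 := by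
  split_ifs with hn
  · simp [hn]
  have hnI : (n : ℂ) * I ≠ 0 := by simp [hn]
  have hper : exp (n * I * (2 * π : ℝ)) = 1 := by
    rw [← exp_int_mul_two_pi_mul_I n]; push_cast; ring_nf
  simp_rw [mul_right_comm _ _ I]
  rw [integral_exp_mul_complex hnI, hper]
  simp

section ExpSum

variable {ι : Type*} [Fintype ι]

lemma integral_norm_sq_sum_exp (a : ι → ℂ) (d : ι → ℤ) :
    ((∫ θ in (0:ℝ)..2 * π, ‖∑ i, a i * exp (d i * θ * I)‖ ^ 2 : ℝ) : ℂ) =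
      2 * π * ∑ i, ∑ i', if d i = d i' then a i * conj (a i') else 0 := by
  have hexpand (θ : ℝ) : ((‖∑ i, a i * exp (d i * θ * I)‖ ^ 2 : ℝ) : ℂ) =
      ∑ i, ∑ i', a i * conj (a i') * exp ((d i - d i' : ℤ) * θ * I) := by
    rw [ofReal_pow, ← mul_conj', map_sum, sum_mul_sum]
    refine sum_congr rfl fun i _ => sum_congr rfl fun i' _ => ?_
    rw [map_mul, ← exp_conj]
    simp only [map_mul, conj_ofReal, conj_I, map_intCast]
    rw [show ((d i - d i' : ℤ) : ℂ) * θ * I = d i * θ * I + d i' * θ * -I by push_cast; ring,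
      exp_add]
    ring
  rw [← intervalIntegral.integral_ofReal]
  simp_rw [hexpand]
  rw [integral_finsetSum fun i _ => ?_]
  · rw [mul_sum]
    refine sum_congr rfl fun i _ => ?_
    rw [integral_finsetSum fun i' _ => ?_, mul_sum]
    · refine sum_congr rfl fun i' _ => ?_
      rw [integral_const_mul, integral_exp_int_mul_I]
      simp only [sub_eq_zero]
      split_ifs <;> ring
    · exact (by fun_prop : Continuous _).intervalIntegrable _ _
  · exact (by fun_prop : Continuous _).intervalIntegrable _ _

lemma integral_norm_sq_sum_exp_of_injective (a : ι → ℂ) {d : ι → ℤ}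
    (hd : Function.Injective d) :
    ∫ θ in (0:ℝ)..2 * π, ‖∑ i, a i * exp (d i * θ * I)‖ ^ 2 = 2 * π * ∑ i, ‖a i‖ ^ 2 := by
  apply ofReal_injective
  rw [integral_norm_sq_sum_exp]
  classical
  simp [hd.eq_iff, mul_conj', mul_sum]

lemma integral_norm_sq_sum_exp_le (a : ι → ℂ) (d : ι → ℤ) :
    ∫ θ in (0:ℝ)..2 * π, ‖∑ i, a i * exp (d i * θ * I)‖ ^ 2 ≤
      2 * π * ∑ i, ∑ i', if d i = d i' then ‖a i‖ * ‖a i'‖ else 0 := by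
  calc _ ≤ ‖((∫ θ in (0:ℝ)..2 * π, ‖∑ i, a i * exp (d i * θ * I)‖ ^ 2 : ℝ) : ℂ)‖ := by
        rw [norm_real]; exact le_abs_self _
    _ ≤ _ := by
        rw [integral_norm_sq_sum_exp, norm_mul]
        gcongr
        · simp [abs_of_pos Real.pi_pos]
        refine (norm_sum_le _ _).trans (sum_le_sum fun i _ => (norm_sum_le _ _).trans ?_)
        refine sum_le_sum fun i' _ => ?_
        split_ifs <;> simp

lemma sum_sum_ite_eq_mul_le {β : Type*} [DecidableEq β] (d : ι → β) (w : ι → ℝ) {K : ℕ}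
    (hK : ∀ i, #{i' | d i = d i'} ≤ K) :
    ∑ i, ∑ i', (if d i = d i' then w i * w i' else 0) ≤ K * ∑ i, w i ^ 2 := by
  have hsymm : ∑ i, ∑ i', (if d i = d i' then w i' ^ 2 else 0) =
      ∑ i, ∑ i', (if d i = d i' then w i ^ 2 else 0) := by
    rw [sum_comm]
    exact sum_congr rfl fun i _ => sum_congr rfl fun i' _ => if_congr eq_comm rfl rfl
  calc _ ≤ ∑ i, ∑ i', (if d i = d i' then (w i ^ 2 + w i' ^ 2) / 2 else 0) := by
        gcongr with i _ i' _
        split_ifs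
        · nlinarith [sq_nonneg (w i - w i')]
        · rfl
    _ = (∑ i, ∑ i', (if d i = d i' then w i ^ 2 else 0) +
          ∑ i, ∑ i', (if d i = d i' then w i' ^ 2 else 0)) / 2 := by
        rw [← sum_add_distrib, sum_div]
        refine sum_congr rfl fun i _ => ?_
        rw [← sum_add_distrib, sum_div]
        refine sum_congr rfl fun i' _ => ?_
        split_ifs <;> ring
    _ = ∑ i, #{i' | d i = d i'} * w i ^ 2 := by
        rw [hsymm, add_self_div_two]
        simp only [sum_ite, sum_const_zero, add_zero, sum_const, nsmul_eq_mul]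
    _ ≤ _ := by
        rw [mul_sum]; gcongr with i _; exact_mod_cast hK i

end ExpSum

lemma Fin.card_filter_two_pow_add_two_pow_eq_le {n : ℕ} (p : Fin n × Fin n) :
    #{q : Fin n × Fin n | (2 : ℤ) ^ (p.1 : ℕ) + 2 ^ (p.2 : ℕ) = 2 ^ (q.1 : ℕ) + 2 ^ (q.2 : ℕ)}
      ≤ 2 := by
  refine (card_le_card (t := {p, p.swap}) fun q hq => ?_).trans card_le_two
  rw [mem_filter] at hq
  rcases Nat.two_pow_add_two_pow_eq_iff.1 (by exact_mod_cast hq.2) with ⟨h1, h2⟩ | ⟨h1, h2⟩ <;>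
    simp [Prod.ext_iff, Fin.ext_iff, h1, h2]

section Lacunary

variable {n : ℕ} (c : Fin n → ℂ)

lemma sum_mul_exp_pow_two_pow (θ : ℝ) :
    ∑ j, c j * exp (θ * I) ^ 2 ^ (j : ℕ) =
      ∑ j, c j * exp (((2 : ℤ) ^ (j : ℕ) : ℤ) * θ * I) := by
  refine sum_congr rfl fun j _ => ?_
  rw [← exp_nat_mul]; push_cast; ring_nf

lemma sum_mul_exp_pow_two_pow_sq (θ : ℝ) :
    (∑ j, c j * exp (θ * I) ^ 2 ^ (j : ℕ)) ^ 2 =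
      ∑ p : Fin n × Fin n, c p.1 * c p.2 *
        exp (((2 : ℤ) ^ (p.1 : ℕ) + 2 ^ (p.2 : ℕ) : ℤ) * θ * I) := by
  rw [sum_mul_exp_pow_two_pow, sq, sum_mul_sum, ← Finset.univ_product_univ, sum_product]
  refine sum_congr rfl fun j _ => sum_congr rfl fun k _ => ?_
  push_cast
  rw [add_mul, add_mul, Complex.exp_add]
  ring

lemma integral_norm_sq_sum_mul_exp_pow_two_pow :
    ∫ θ in (0:ℝ)..2 * π, ‖∑ j, c j * exp (θ * I) ^ 2 ^ (j : ℕ)‖ ^ 2 =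
      2 * π * ∑ j, ‖c j‖ ^ 2 := by
  simp_rw [sum_mul_exp_pow_two_pow]
  exact integral_norm_sq_sum_exp_of_injective c
    ((Int.pow_right_injective (by norm_num)).comp Fin.val_injective)

lemma integral_norm_pow_four_sum_mul_exp_pow_two_pow_le :
    ∫ θ in (0:ℝ)..2 * π, ‖∑ j, c j * exp (θ * I) ^ 2 ^ (j : ℕ)‖ ^ 4 ≤
      2 * π * (2 * (∑ j, ‖c j‖ ^ 2) ^ 2) := by
  have hsq (θ : ℝ) : ‖∑ j, c j * exp (θ * I) ^ 2 ^ (j : ℕ)‖ ^ 4 =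
      ‖(∑ j, c j * exp (θ * I) ^ 2 ^ (j : ℕ)) ^ 2‖ ^ 2 := by
    rw [norm_pow, ← pow_mul]
  simp_rw [hsq, sum_mul_exp_pow_two_pow_sq]
  refine (integral_norm_sq_sum_exp_le _ _).trans ?_
  gcongr
  refine (sum_sum_ite_eq_mul_le _ _ Fin.card_filter_two_pow_add_two_pow_eq_le).trans_eq ?_
  simp only [norm_mul, sq, sum_mul_sum, ← univ_product_univ, sum_product]
  push_cast
  congr 1
  exact sum_congr rfl fun j _ => sum_congr rfl fun k _ => by ring

end Lacunary

/-- there is `C > 0` such that every lacunary polynomial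
`f(z) = Σ_{j=0}^m c_j z^{2^j}` satisfies
`(1/2π) ∫_𝕋 |f|⁴ ≤ C ((1/2π) ∫_𝕋 |f|²)²`, with the circle parametrized as `z = e^{iθ}`. -/
theorem stmt5 :
    ∃ C : ℝ, 0 < C ∧ ∀ (m : ℕ) (c : Fin (m + 1) → ℂ),
      (1 / (2 * Real.pi)) * ∫ θ in (0:ℝ)..(2 * Real.pi),
          ‖∑ j, c j * Complex.exp (θ * Complex.I) ^ (2 ^ (j:ℕ))‖ ^ 4
        ≤ C * ((1 / (2 * Real.pi)) * ∫ θ in (0:ℝ)..(2 * Real.pi),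
          ‖∑ j, c j * Complex.exp (θ * Complex.I) ^ (2 ^ (j:ℕ))‖ ^ 2) ^ 2 := by
  refine ⟨2, two_pos, fun m c => ?_⟩
  rw [integral_norm_sq_sum_mul_exp_pow_two_pow]
  have hπ : 0 < 2 * π := by positivity
  calc _ ≤ 1 / (2 * π) * (2 * π * (2 * (∑ j, ‖c j‖ ^ 2) ^ 2)) := by
        gcongr; exact integral_norm_pow_four_sum_mul_exp_pow_two_pow_le c
    _ = _ := by field_simp
end
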